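/- Let K ≥ 1 and for each k = 1,…,K let γ_k > 0, W_k > 0, μ_k ∈ (0,1), with CRRA demands x_k(p) = W_k(R_k − 1)/((1−p) + R_k p), R_k = exp((logit(μ_k) − logit(p))/γ_k). If the posteriors μ_1,…,μ_K are not all equal, then any p* ∈ (0,1) satisfying Σ_{k=1}^K x_k(p*) = 0 obeys min_k μ_k < p* < max_k μ_k. -/
import Mathlib


open Real

noncomputable def logit (q : ℝ) : ℝ := Real.log (q / (1 - q))

/-- The CRRA binary-asset demand with risk aversion `γ`, wealth `W`, posterior `μ`, price `p`. -/
noncomputable def crraDemand (γ W μ p : ℝ) : ℝ :=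
  W * (Real.exp ((logit μ - logit p) / γ) - 1) /
    ((1 - p) + Real.exp ((logit μ - logit p) / γ) * p)

lemma logit_lt_logit {a b : ℝ} (ha : 0 < a) (hb : b < 1) (hab : a < b) :
    logit a < logit b := by
  have h1a : 0 < 1 - a := by linarith
  have h1b : 0 < 1 - b := by linarith
  have hb0 : 0 < b := ha.trans hab
  apply Real.log_lt_log (div_pos ha h1a)
  rw [div_lt_div_iff₀ h1a h1b]
  nlinarith

lemma crraDemand_denom_pos (γ W μ p : ℝ) (hp : p ∈ Set.Ioo (0:ℝ) 1) :
    0 < (1 - p) + Real.exp ((logit μ - logit p) / γ) * p := by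
  have := Real.exp_pos ((logit μ - logit p) / γ)
  nlinarith [hp.1, hp.2]

lemma crraDemand_pos (γ W μ p : ℝ) (hγ : 0 < γ) (hW : 0 < W)
    (hμ : μ ∈ Set.Ioo (0:ℝ) 1) (hp : p ∈ Set.Ioo (0:ℝ) 1) (h : p < μ) :
    0 < crraDemand γ W μ p := by
  have hl : logit p < logit μ := logit_lt_logit hp.1 hμ.2 h
  have hR : 1 < Real.exp ((logit μ - logit p) / γ) := by
    rw [← Real.exp_zero]
    exact Real.exp_lt_exp.2 (div_pos (by linarith) hγ)
  exact div_pos (by nlinarith) (crraDemand_denom_pos γ W μ p hp)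

lemma crraDemand_neg (γ W μ p : ℝ) (hγ : 0 < γ) (hW : 0 < W)
    (hμ : μ ∈ Set.Ioo (0:ℝ) 1) (hp : p ∈ Set.Ioo (0:ℝ) 1) (h : μ < p) :
    crraDemand γ W μ p < 0 := by
  have hl : logit μ < logit p := logit_lt_logit hμ.1 hp.2 h
  have hR : Real.exp ((logit μ - logit p) / γ) < 1 := by
    rw [← Real.exp_zero]
    exact Real.exp_lt_exp.2 (div_neg_of_neg_of_pos (by linarith) hγ)
  exact div_neg_of_neg_of_pos (by nlinarith) (crraDemand_denom_pos γ W μ p hp)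

lemma crraDemand_zero (γ W μ p : ℝ) (h : μ = p) :
    crraDemand γ W μ p = 0 := by
  simp [crraDemand, h]

/-- If posteriors are not all equal, any clearing price lies strictly
between the smallest and the largest posterior. -/
theorem clearing_price_between_posteriors
    (K : ℕ) (hK : 1 ≤ K) (hne : (Finset.univ : Finset (Fin K)).Nonempty)
    (γ W μ : Fin K → ℝ) (hγ : ∀ k, 0 < γ k) (hW : ∀ k, 0 < W k)
    (hμ : ∀ k, μ k ∈ Set.Ioo (0:ℝ) 1)
    (hne' : ¬ ∀ k l, μ k = μ l)
    (pstar : ℝ) (hpstar : pstar ∈ Set.Ioo (0:ℝ) 1)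
    (hclear : ∑ k, crraDemand (γ k) (W k) (μ k) pstar = 0) :
    Finset.univ.inf' hne μ < pstar ∧ pstar < Finset.univ.sup' hne μ := by
  push_neg at hne'
  obtain ⟨k0, l0, hkl⟩ := hne'
  constructor
  · by_contra hle
    push_neg at hle
    -- pstar ≤ inf, so all demands ≥ 0, and one is > 0
    have hall : ∀ k, pstar ≤ μ k := fun k =>
      hle.trans (Finset.inf'_le μ (Finset.mem_univ k))
    have hnn : ∀ k ∈ (Finset.univ : Finset (Fin K)),
        0 ≤ crraDemand (γ k) (W k) (μ k) pstar := by
      intro k _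
      rcases eq_or_lt_of_le (hall k) with h | h
      · exact le_of_eq (crraDemand_zero _ _ _ _ h.symm).symm
      · exact (crraDemand_pos _ _ _ _ (hγ k) (hW k) (hμ k) hpstar h).le
    have hex : ∃ k ∈ (Finset.univ : Finset (Fin K)),
        0 < crraDemand (γ k) (W k) (μ k) pstar := by
      rcases lt_or_gt_of_ne hkl with h | h
      · exact ⟨l0, Finset.mem_univ _,
          crraDemand_pos _ _ _ _ (hγ l0) (hW l0) (hμ l0) hpstar
            (lt_of_le_of_lt (hall k0) h)⟩
      · exact ⟨k0, Finset.mem_univ _,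
          crraDemand_pos _ _ _ _ (hγ k0) (hW k0) (hμ k0) hpstar
            (lt_of_le_of_lt (hall l0) h)⟩
    have := Finset.sum_pos' hnn hex
    linarith
  · by_contra hle
    push_neg at hle
    have hall : ∀ k, μ k ≤ pstar := fun k =>
      (Finset.le_sup' μ (Finset.mem_univ k)).trans hle
    have hnp : ∀ k ∈ (Finset.univ : Finset (Fin K)),
        crraDemand (γ k) (W k) (μ k) pstar ≤ (0:ℝ) := by
      intro k _
      rcases eq_or_lt_of_le (hall k) with h | h
      · exact le_of_eq (crraDemand_zero _ _ _ _ h)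
      · exact (crraDemand_neg _ _ _ _ (hγ k) (hW k) (hμ k) hpstar h).le
    have hex : ∃ k ∈ (Finset.univ : Finset (Fin K)),
        crraDemand (γ k) (W k) (μ k) pstar < 0 := by
      rcases lt_or_gt_of_ne hkl with h | h
      · exact ⟨k0, Finset.mem_univ _,
          crraDemand_neg _ _ _ _ (hγ k0) (hW k0) (hμ k0) hpstar
            (lt_of_lt_of_le h (hall l0))⟩
      · exact ⟨l0, Finset.mem_univ _,
          crraDemand_neg _ _ _ _ (hγ l0) (hW l0) (hμ l0) hpstar
            (lt_of_lt_of_le h (hall k0))⟩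
    have hlt : ∑ k, crraDemand (γ k) (W k) (μ k) pstar < ∑ _k : Fin K, (0:ℝ) := by
      obtain ⟨j, hj, hjlt⟩ := hex
      exact Finset.sum_lt_sum hnp ⟨j, hj, hjlt⟩
    simp at hlt
    linarith
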